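/- Suppose t^n ≠ 1. Set V := (I - P·Y^{-1})^{-1} and W := (I - (I - P)·X^{-1})^{-1}, let K be the 2m×m complex matrix with upper m×m block (t^{-n}·(Σ_{i=0}^{m-1} X^i)·X)·(I - P) + W·P and lower m×m block (-t^{-n}·(Σ_{i=0}^{n-1} Y^i)·Y)·(I - P) - V·(I - X^{-1})·W·P, let J be the 2m×m matrix with upper block t^{-n}·(Σ_{i=0}^{m-1} X^i)·X and lower block -t^{-n}·(Σ_{i=0}^{n-1} Y^i)·Y, and set Θ := (I - P) + P·(t^{-n}·(Σ_{i=0}^{m-1} X^i)·X)·P. Then K·Θ = J. -/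

import Mathlib

/-!
Write `A := t⁻ⁿ (∑_{i<m} Xⁱ) X`, `B := -t⁻ⁿ (∑_{i<n} Yⁱ) Y` and `Q := 1 - P`. Since `C` is a
weighted cyclic permutation matrix with total weight `t`, we get `Cᵐ = t`, hence `Xᵐ = tⁿ`, and the
geometric sum telescopes to `(1 - X⁻¹) A = t⁻ⁿ (tⁿ - 1)`, a scalar. Consequently
`P A P = (1 - Q X⁻¹) A P`, so `W (P A P) = A P`, and multiplying by `Θ = Q + P A P` reduces the two
block rows of `K Θ = J` to this identity and to `t⁻ⁿ (tⁿ - 1) V P = -B P`. The latter is an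
identity of diagonal matrices; entrywise it is the geometric sum formula for an eigenvalue `y` of
`Y`, which satisfies `yⁿ = tⁿ ≠ 1`.

That `W` really inverts `1 - Q X⁻¹` is where the arithmetic hypotheses enter: since
`Σ (bᵢ + a) ≡ m a ≢ 0 (mod n)`, the diagonal matrix `Q` has a zero entry, and
`Q X⁻¹ = t⁻ⁿ Q C^{n(m-1)}` is a weighted permutation matrix along a single `m`-cycle
(`gcd (n (m - 1), m) = 1`), so its `m`-th power is the product of all weights, which is `0`.
-/

open Matrix Finset

section BlockIdentity

variable {R : Type*} [Ring R] {A B P V W Xi : R}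

theorem mul_sandwich_eq_mul (hP : IsIdempotentElem P) (hW : W * (1 - (1 - P) * Xi) = 1)
    (hA : Commute ((1 - Xi) * A) P) : W * (P * A * P) = A * P := by
  have hQ : (1 - P) * ((1 - Xi) * A) * P = 0 := by
    rw [mul_assoc, hA.eq, ← mul_assoc, hP.one_sub_mul_self, zero_mul]
  have hPAP : P * A * P = (1 - (1 - P) * Xi) * (A * P) := by
    rw [← sub_eq_zero, ← neg_eq_zero, ← hQ]; noncomm_ring
  rw [hPAP, ← mul_assoc, hW, one_mul]

theorem top_mul_theta (hP : IsIdempotentElem P) (hW : W * (1 - (1 - P) * Xi) = 1)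
    (hA : Commute ((1 - Xi) * A) P) :
    (A * (1 - P) + W * P) * ((1 - P) + P * A * P) = A := by
  calc (A * (1 - P) + W * P) * ((1 - P) + P * A * P)
      = A * ((1 - P) * (1 - P)) + A * ((1 - P) * P) * A * P + W * (P * (1 - P))
          + W * ((P * P) * A * P) := by noncomm_ring
    _ = A * (1 - P) + A * P := by
      rw [hP.one_sub.eq, hP.one_sub_mul_self, hP.mul_one_sub_self, hP.eq,
        mul_sandwich_eq_mul hP hW hA]
      simp
    _ = A := by rw [← mul_add, sub_add_cancel, mul_one]

theorem bottom_mul_theta (hP : IsIdempotentElem P) (hW : W * (1 - (1 - P) * Xi) = 1)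
    (hA : Commute ((1 - Xi) * A) P) (hB : V * ((1 - Xi) * A) * P = -(B * P)) :
    (B * (1 - P) - V * (1 - Xi) * W * P) * ((1 - P) + P * A * P) = B := by
  calc (B * (1 - P) - V * (1 - Xi) * W * P) * ((1 - P) + P * A * P)
      = B * ((1 - P) * (1 - P)) + B * ((1 - P) * P) * A * P - V * (1 - Xi) * W * (P * (1 - P))
          - V * (1 - Xi) * (W * ((P * P) * A * P)) := by noncomm_ring
    _ = B * (1 - P) - V * ((1 - Xi) * A) * P := by
      rw [hP.one_sub.eq, hP.one_sub_mul_self, hP.mul_one_sub_self, hP.eq,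
        mul_sandwich_eq_mul hP hW hA]
      noncomm_ring
    _ = B := by rw [hB, sub_neg_eq_add, ← mul_add, sub_add_cancel, mul_one]

end BlockIdentity

theorem one_sub_mul_geom_sum_mul {R : Type*} [Ring R] {x y : R} (h : y * x = 1) (m : ℕ) :
    (1 - y) * ((∑ i ∈ range m, x ^ i) * x) = x ^ m - 1 := by
  rw [(Commute.sum_left _ _ _ fun i _ => (Commute.refl x).pow_left i).eq, ← mul_assoc, sub_mul,
    one_mul, h, mul_geom_sum]

theorem geom_sum_mul_self_eq {K : Type*} [Field K] {y : K} (hy0 : y ≠ 0) (hy1 : y ≠ 1) (n : ℕ) :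
    (∑ k ∈ range n, y ^ k) * y = (y ^ n - 1) * (1 - y⁻¹)⁻¹ := by
  have : y - 1 ≠ 0 := sub_ne_zero.mpr hy1
  rw [← geom_sum_mul, mul_assoc]
  field_simp

theorem mul_exp_two_pi_mul_I_div_pow (t : ℂ) (b : ℤ) (n : ℕ) :
    (t * Complex.exp (2 * Real.pi * Complex.I * b / n)) ^ n = t ^ n := by
  rcases eq_or_ne n 0 with rfl | hn
  · simp
  rw [mul_pow, ← Complex.exp_nat_mul, mul_div_cancel₀ _ (Nat.cast_ne_zero.mpr hn),
    mul_comm _ (b : ℂ), Complex.exp_int_mul_two_pi_mul_I, mul_one]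

theorem exists_not_dvd_add {ι : Type*} [Fintype ι] {n : ℕ}
    (hcop : Nat.Coprime (Fintype.card ι) n) {b : ι → ℤ} (hb : (n : ℤ) ∣ ∑ i, b i) {a : ℤ}
    (ha : ¬ (n : ℤ) ∣ a) : ∃ i, ¬ (n : ℤ) ∣ b i + a := by
  by_contra! h
  have hsum : (n : ℤ) ∣ ∑ i, (b i + a) := dvd_sum fun i _ => h i
  rw [sum_add_distrib, sum_const, card_univ, nsmul_eq_mul] at hsum
  exact ha ((Nat.isCoprime_iff_coprime.mpr hcop.symm).dvd_of_dvd_mul_left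
    ((dvd_add_right hb).mp hsum))

section MatrixPower

variable {ι K : Type*} [Fintype ι] [DecidableEq ι] [Field K] {X : Matrix ι ι K} {m : ℕ} {c : K}

theorem inv_eq_inv_smul_pow_pred (hX : X ^ m = c • 1) (hc : c ≠ 0) (hm : m ≠ 0) :
    X⁻¹ = c⁻¹ • X ^ (m - 1) :=
  inv_eq_right_inv <| by
    rw [mul_smul_comm, ← pow_succ', Nat.sub_add_cancel (Nat.one_le_iff_ne_zero.mpr hm), hX,
      smul_smul, inv_mul_cancel₀ hc, one_smul]

theorem one_sub_inv_mul_smul_geom_sum_mul (hX : X ^ m = c • 1) (hc : c ≠ 0) (hm : m ≠ 0) :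
    (1 - X⁻¹) * (c⁻¹ • ((∑ i ∈ range m, X ^ i) * X)) = (c⁻¹ * (c - 1)) • 1 := by
  have hXX : X⁻¹ * X = 1 := by
    rw [inv_eq_inv_smul_pow_pred hX hc hm, smul_mul_assoc, ← pow_succ,
      Nat.sub_add_cancel (Nat.one_le_iff_ne_zero.mpr hm), hX, smul_smul, inv_mul_cancel₀ hc,
      one_smul]
  rw [mul_smul_comm, one_sub_mul_geom_sum_mul hXX m, hX, mul_smul, sub_smul, one_smul]

end MatrixPower

section MonomialMatrix

variable {ι R : Type*} [Fintype ι] [DecidableEq ι] [CommSemiring R]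

theorem permMatrix_mul_diagonal (σ : Equiv.Perm ι) (e : ι → R) :
    σ.permMatrix R * diagonal e = diagonal (e ∘ σ) * σ.permMatrix R := by
  ext i j
  by_cases h : σ i = j <;> simp [PEquiv.toMatrix_apply, h]

theorem diagonal_mul_permMatrix_pow (d : ι → R) (σ : Equiv.Perm ι) (k : ℕ) :
    (diagonal d * σ.permMatrix R) ^ k
      = diagonal (fun i => ∏ j ∈ range k, d ((σ ^ j) i)) * (σ ^ k).permMatrix R := by
  induction k with
  | zero => simp
  | succ k ih =>
    rw [pow_succ, ih, mul_assoc, ← mul_assoc ((σ ^ k).permMatrix R), permMatrix_mul_diagonal,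
      mul_assoc, ← permMatrix_mul, ← pow_succ', ← mul_assoc, diagonal_mul_diagonal]
    simp [prod_range_succ]

end MonomialMatrix

section FinRotate

variable {m : ℕ}

theorem val_finRotate_pow_apply (k : ℕ) (i : Fin m) :
    ((finRotate m ^ k) i : ℕ) = (i + k) % m := by
  induction k with
  | zero => simp [Nat.mod_eq_of_lt i.isLt]
  | succ k ih =>
    rw [pow_succ', Equiv.Perm.mul_apply, finRotate_apply, Fin.val_add, ih, Fin.val_one',
      Nat.mod_add_mod, Nat.add_mod_mod, add_assoc]

theorem finRotate_apply_eq_iff (i j : Fin m) :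
    finRotate m i = j ↔ (i : ℕ) + 1 = j ∨ (i : ℕ) = m - 1 ∧ (j : ℕ) = 0 := by
  rw [Fin.ext_iff, ← pow_one (finRotate m), val_finRotate_pow_apply]
  rcases (show (i : ℕ) + 1 ≤ m from i.isLt).lt_or_eq with h | h
  · rw [Nat.mod_eq_of_lt h]; omega
  · rw [h, Nat.mod_self]; omega

theorem finRotate_pow_self : finRotate m ^ m = 1 := by
  ext i
  simp [val_finRotate_pow_apply, Nat.mod_eq_of_lt i.isLt]

theorem prod_range_finRotate_pow_pow {M : Type*} [CommMonoid M] {k : ℕ} (hk : Nat.Coprime k m)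
    (d : Fin m → M) (i : Fin m) : ∏ j ∈ range m, d (((finRotate m ^ k) ^ j) i) = ∏ x, d x := by
  have hval (j : ℕ) : (((finRotate m ^ k) ^ j) i : ℕ) = (i + k * j) % m := by
    rw [← pow_mul, val_finRotate_pow_apply]
  have hinj : Set.InjOn (fun j => ((finRotate m ^ k) ^ j) i) (range m) := by
    intro j₁ h₁ j₂ h₂ h
    have h' := congrArg Fin.val h
    simp only [hval] at h'
    exact (Nat.ModEq.cancel_left_of_coprime (by rwa [Nat.gcd_comm])
      (Nat.ModEq.add_left_cancel' _ h')).eq_of_lt_of_lt (by simpa using h₁) (by simpa using h₂)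
  have himage : (range m).image (fun j => ((finRotate m ^ k) ^ j) i) = univ :=
    eq_univ_of_card _ (by rw [card_image_of_injOn hinj, card_range, Fintype.card_fin])
  rw [← himage, prod_image hinj]

theorem diagonal_mul_permMatrix_finRotate_pow_pow {R : Type*} [CommSemiring R] {k : ℕ}
    (hk : Nat.Coprime k m) (d : Fin m → R) :
    (diagonal d * (finRotate m ^ k).permMatrix R) ^ m = (∏ x, d x) • 1 := by
  rw [diagonal_mul_permMatrix_pow, ← pow_mul, mul_comm, pow_mul, finRotate_pow_self, one_pow,
    permMatrix_one, mul_one, smul_one_eq_diagonal]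
  exact congrArg diagonal (funext fun i => prod_range_finRotate_pow_pow hk d i)

end FinRotate

section CycleMatrix

variable {R : Type*} [CommSemiring R]

def cycleMatrix (m : ℕ) (t : R) : Matrix (Fin m) (Fin m) R :=
  of fun i j => if (i : ℕ) + 1 = j then 1 else if (i : ℕ) = m - 1 ∧ (j : ℕ) = 0 then t else 0

variable {m : ℕ} [NeZero m]

theorem cycleMatrix_eq (t : R) : cycleMatrix m t
    = diagonal (fun i => if finRotate m i = 0 then t else 1) * (finRotate m).permMatrix R := by
  ext i j
  simp only [cycleMatrix, of_apply, diagonal_mul, PEquiv.toMatrix_apply, Equiv.toPEquiv_apply,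
    Option.mem_def, Option.some.injEq, mul_ite, mul_one, mul_zero, finRotate_apply_eq_iff,
    Fin.val_zero, Nat.add_one_ne_zero, false_or, and_true]
  have := i.isLt
  have := j.isLt
  split_ifs <;> first | rfl | omega

theorem cycleMatrix_pow_self (t : R) : cycleMatrix m t ^ m = t • 1 := by
  have h := diagonal_mul_permMatrix_finRotate_pow_pow (R := R) (Nat.coprime_one_left m)
    (fun i => if finRotate m i = 0 then t else 1)
  rw [pow_one, Equiv.prod_comp (finRotate m) (fun j => if j = 0 then t else 1),
    prod_ite_eq' univ 0] at h
  simpa [cycleMatrix_eq] using h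

theorem cycleMatrix_pow_pow_self (t : R) (n : ℕ) : (cycleMatrix m t ^ n) ^ m = t ^ n • 1 := by
  rw [← pow_mul, mul_comm, pow_mul, cycleMatrix_pow_self, smul_pow, one_pow]

theorem isNilpotent_diagonal_mul_cycleMatrix_pow {k : ℕ} (hk : Nat.Coprime k m) (t : R)
    {d : Fin m → R} {x₀ : Fin m} (hd : d x₀ = 0) :
    IsNilpotent (diagonal d * cycleMatrix m t ^ k) := by
  refine ⟨m, ?_⟩
  rw [cycleMatrix_eq, diagonal_mul_permMatrix_pow, ← mul_assoc, diagonal_mul_diagonal,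
    diagonal_mul_permMatrix_finRotate_pow_pow hk, prod_eq_zero (mem_univ x₀) (by simp [hd]),
    zero_smul]

theorem isNilpotent_diagonal_mul_inv_cycleMatrix_pow {K : Type*} [Field K] {n : ℕ}
    (hmn : Nat.Coprime m n) {t : K} (ht : t ≠ 0) {d : Fin m → K} {x₀ : Fin m} (hd : d x₀ = 0) :
    IsNilpotent (diagonal d * (cycleMatrix m t ^ n)⁻¹) := by
  have hcop : Nat.Coprime (n * (m - 1)) m := hmn.symm.mul_left
    ((Nat.coprime_self_sub_left NeZero.one_le).mpr (Nat.coprime_one_left m))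
  rw [inv_eq_inv_smul_pow_pred (cycleMatrix_pow_pow_self t n) (pow_ne_zero n ht) (NeZero.ne m),
    mul_smul_comm, ← pow_mul]
  exact (isNilpotent_diagonal_mul_cycleMatrix_pow hcop t hd).smul _

end CycleMatrix

section Diagonal

variable {ι K : Type*} [Fintype ι] [DecidableEq ι] [Field K]

theorem isIdempotentElem_diagonal {p : ι → K} (hp : ∀ i, p i = 0 ∨ p i = 1) :
    IsIdempotentElem (diagonal p) := by
  rw [IsIdempotentElem, diagonal_mul_diagonal]
  exact congrArg diagonal (funext fun i => by rcases hp i with h | h <;> simp [h])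

theorem inv_diagonal_of_ne_zero {d : ι → K} (hd : ∀ i, d i ≠ 0) :
    (diagonal d)⁻¹ = diagonal d⁻¹ :=
  inv_eq_right_inv <| by
    rw [diagonal_mul_diagonal, ← diagonal_one]
    exact congrArg diagonal (funext fun i => mul_inv_cancel₀ (hd i))

theorem inv_one_sub_diagonal_mul_inv_smul_mul_diagonal {n : ℕ} {c : K} (hc : c ≠ 1)
    {y p : ι → K} (hy0 : ∀ i, y i ≠ 0) (hyn : ∀ i, y i ^ n = c) (hp : ∀ i, p i = 0 ∨ p i = 1) :
    (1 - diagonal p * (diagonal y)⁻¹)⁻¹ * ((c⁻¹ * (c - 1)) • 1) * diagonal p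
      = (c⁻¹ • ((∑ k ∈ range n, diagonal y ^ k) * diagonal y)) * diagonal p := by
  have hy1 (i : ι) : y i ≠ 1 := fun h => hc (by rw [← hyn i, h, one_pow])
  have hV : 1 - diagonal p * (diagonal y)⁻¹ = diagonal (1 - p * y⁻¹) := by
    rw [inv_diagonal_of_ne_zero hy0, diagonal_mul_diagonal, ← diagonal_one, diagonal_sub]; rfl
  have hV0 (i : ι) : (1 - p * y⁻¹) i ≠ 0 := by
    rcases hp i with h | h
    · simp [h]
    · simpa [h, sub_eq_zero] using (inv_ne_one.mpr (hy1 i)).symm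
  have hsum : (∑ k ∈ range n, diagonal y ^ k) * diagonal y
      = diagonal ((∑ k ∈ range n, y ^ k) * y) := by
    simp only [← diagonalRingHom_apply, ← map_pow, ← map_sum, ← map_mul]
  rw [hV, inv_diagonal_of_ne_zero hV0, hsum, smul_one_eq_diagonal, ← diagonal_smul,
    diagonal_mul_diagonal, diagonal_mul_diagonal, diagonal_mul_diagonal]
  refine congrArg diagonal (funext fun i => ?_)
  rcases hp i with h | h
  · simp [h]
  · simp only [Pi.mul_apply, Pi.sub_apply, Pi.inv_apply, Pi.one_apply, Pi.smul_apply, h,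
      one_mul, mul_one, smul_eq_mul, Finset.sum_apply, Pi.pow_apply,
      geom_sum_mul_self_eq (hy0 i) (hy1 i), hyn i]
    ring

end Diagonal

theorem stmt_14_general (m n : ℕ) (hmn : Nat.Coprime m n)
    (t : ℂ) (ht0 : t ≠ 0) (htn : t ^ n ≠ 1)
    (b : Fin m → ℤ) (hb : (n : ℤ) ∣ ∑ i, b i)
    (a : ℤ) (ha : ¬ (n : ℤ) ∣ a)
    (C X Y P V W Θ : Matrix (Fin m) (Fin m) ℂ)
    (hC : ∀ i j : Fin m, C i j =
      if (i : ℕ) + 1 = (j : ℕ) then 1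
      else if (i : ℕ) = m - 1 ∧ (j : ℕ) = 0 then t else 0)
    (hX : X = C ^ n)
    (hY : Y = t • Matrix.diagonal
      (fun i => Complex.exp (2 * (Real.pi : ℂ) * Complex.I * (b i : ℂ) / (n : ℂ))))
    (hP : P = Matrix.diagonal (fun i => if (n : ℤ) ∣ (b i + a) then 0 else 1))
    (hV : V = (1 - P * Y⁻¹)⁻¹)
    (hW : W = (1 - (1 - P) * X⁻¹)⁻¹)
    (hΘ : Θ = (1 - P) + P * (t ^ (-(n : ℤ)) • ((∑ i ∈ Finset.range m, X ^ i) * X)) * P)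
    (K J : Matrix (Fin m ⊕ Fin m) (Fin m) ℂ)
    (hK : K = Matrix.fromRows
      ((t ^ (-(n : ℤ)) • ((∑ i ∈ Finset.range m, X ^ i) * X)) * (1 - P) + W * P)
      ((-(t ^ (-(n : ℤ))) • ((∑ i ∈ Finset.range n, Y ^ i) * Y)) * (1 - P) -
        V * (1 - X⁻¹) * W * P))
    (hJ : J = Matrix.fromRows
      (t ^ (-(n : ℤ)) • ((∑ i ∈ Finset.range m, X ^ i) * X))
      (-(t ^ (-(n : ℤ))) • ((∑ i ∈ Finset.range n, Y ^ i) * Y))) :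
    K * Θ = J := by
  obtain ⟨x₀, hx₀⟩ := exists_not_dvd_add (by rwa [Fintype.card_fin]) hb ha
  have : NeZero m := ⟨x₀.pos.ne'⟩
  rw [ext hC] at hX
  set p : Fin m → ℂ := fun i => if (n : ℤ) ∣ b i + a then 0 else 1 with hpdef
  have hp (i : Fin m) : p i = 0 ∨ p i = 1 := by
    simp only [hpdef]; split_ifs <;> simp
  have hPidem : IsIdempotentElem P := hP ▸ isIdempotentElem_diagonal hp
  have hW' : W * (1 - (1 - P) * X⁻¹) = 1 := by
    have hnil : IsNilpotent ((1 - P) * X⁻¹) := by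
      rw [hP, ← diagonal_one, diagonal_sub, hX]
      exact isNilpotent_diagonal_mul_inv_cycleMatrix_pow hmn ht0 (x₀ := x₀) (by simp [hpdef, hx₀])
    rw [hW]
    exact nonsing_inv_mul _ ((isUnit_iff_isUnit_det _).mp hnil.isUnit_one_sub)
  have hA := one_sub_inv_mul_smul_geom_sum_mul (hX ▸ cycleMatrix_pow_pow_self t n)
    (pow_ne_zero n ht0) (NeZero.ne m)
  have hAP := hA ▸ (Commute.one_left P).smul_left ((t ^ n)⁻¹ * (t ^ n - 1))
  have hy : Y = diagonal fun i => t * Complex.exp (2 * Real.pi * Complex.I * b i / n) := by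
    rw [hY, ← diagonal_smul]; rfl
  simp only [_root_.zpow_neg, zpow_natCast] at hΘ hK hJ
  rw [hK, hΘ, hJ, fromRows_mul, top_mul_theta hPidem hW' hAP, bottom_mul_theta hPidem hW' hAP]
  rw [hA, hV, hP, hy, inv_one_sub_diagonal_mul_inv_smul_mul_diagonal htn
      (fun i => mul_ne_zero ht0 (Complex.exp_ne_zero _))
      (fun i => mul_exp_two_pi_mul_I_div_pow t (b i) n) hp, neg_smul, neg_mul, neg_neg]

/-- `K · Θ = J`: right multiplication of the kernel basis `K` of `∂₁` by `Θ`
yields the image basis `J` of `∂₂`. -/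
theorem stmt_14 (m n : ℕ) (hm : 1 < m) (hn : 1 < n) (hmn : Nat.Coprime m n)
    (r s : ℤ) (hbezout : (m : ℤ) * r + (n : ℤ) * s = 1)
    (hr₁ : -(n : ℤ) < r) (hr₂ : r < 0) (hs₁ : 0 < s) (hs₂ : s < (m : ℤ))
    (t : ℂ) (ht0 : t ≠ 0) (htn : t ^ n ≠ 1)
    (b : Fin m → ℤ) (hb : (n : ℤ) ∣ ∑ i, b i)
    (a : ℤ) (ha : ¬ (n : ℤ) ∣ a)
    (C X Y P V W Θ : Matrix (Fin m) (Fin m) ℂ)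
    (hC : ∀ i j : Fin m, C i j =
      if (i : ℕ) + 1 = (j : ℕ) then 1
      else if (i : ℕ) = m - 1 ∧ (j : ℕ) = 0 then t else 0)
    (hX : X = C ^ n)
    (hY : Y = t • Matrix.diagonal
      (fun i => Complex.exp (2 * (Real.pi : ℂ) * Complex.I * (b i : ℂ) / (n : ℂ))))
    (hP : P = Matrix.diagonal (fun i => if (n : ℤ) ∣ (b i + a) then 0 else 1))
    (hV : V = (1 - P * Y⁻¹)⁻¹)
    (hW : W = (1 - (1 - P) * X⁻¹)⁻¹)
    (hΘ : Θ = (1 - P) + P * (t ^ (-(n : ℤ)) • ((∑ i ∈ Finset.range m, X ^ i) * X)) * P)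
    (K J : Matrix (Fin m ⊕ Fin m) (Fin m) ℂ)
    (hK : K = Matrix.fromRows
      ((t ^ (-(n : ℤ)) • ((∑ i ∈ Finset.range m, X ^ i) * X)) * (1 - P) + W * P)
      ((-(t ^ (-(n : ℤ))) • ((∑ i ∈ Finset.range n, Y ^ i) * Y)) * (1 - P) -
        V * (1 - X⁻¹) * W * P))
    (hJ : J = Matrix.fromRows
      (t ^ (-(n : ℤ)) • ((∑ i ∈ Finset.range m, X ^ i) * X))
      (-(t ^ (-(n : ℤ))) • ((∑ i ∈ Finset.range n, Y ^ i) * Y))) :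
    K * Θ = J :=
  stmt_14_general m n hmn t ht0 htn b hb a ha C X Y P V W Θ hC hX hY hP hV hW hΘ K J hK hJ
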